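/- Suppose 1 < p < ∞ and n ∈ {1,2,…,∞}. Let P : L^p(M) → L^p(M) be a projection and P₁, P₂ : L^p(M) → L^p(M) contractive projections such that [[P₁, P],[P∘, P₂]] is n-positive. Let h, k be positive elements of L^p(M) with P₁(h) = h and P₂(k) = k, and let w : M → s(h) M s(k) be the unique linear map satisfying P(h^{1/2} x k^{1/2}) = h^{1/2} w(x) k^{1/2} for all x ∈ M. Then the restriction R of w to s(h) M s(k) is a projection, i.e. R² = R. -/

import Mathlib

/-!
An abstract framework for Haagerup noncommutative `L^p`-spaces associated with
von Neumann algebras, as used in C. Arhancet,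
"Contractively decomposable projections on noncommutative L^p-spaces".

A von Neumann algebra is modelled as a unital complex normed `*`-algebra `M`
(carrying a distinguished σ-weak topology, given by the class `SigmaWeak`).
The Haagerup space `L^p(M)` together with its matrix amplifications
`S^p_m(L^p(M)) = L^p(M_m(M))` is modelled by the structure `NCLp`:
it records the Banach space `E = L^p(M)`, the adjoint `x ↦ x*`, the positive
cones of all matrix amplifications, the `M`-bimodule structure, support
projections, sandwich products `(h, x, k) ↦ h^{1/2} x k^{1/2}`, the norms of the
amplifications, and the functionals `(H, x) ↦ tr(H^p x)`.
-/

noncomputable section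

open scoped ENNReal ComplexConjugate

/-- The σ-weak (weak-*) topology of a von Neumann algebra, given as abstract data. -/
class SigmaWeak (M : Type*) where
  /-- the σ-weak topology -/
  topology : TopologicalSpace M

/-- A map between von Neumann algebras is *normal* (weak-* continuous) if it is
continuous for the σ-weak topologies. -/
def IsNormalMap (M N : Type*) [SigmaWeak M] [SigmaWeak N] (f : M → N) : Prop :=
  @Continuous M N SigmaWeak.topology SigmaWeak.topology f

/-- Matrices over a von Neumann algebra carry the product σ-weak topology. -/
instance matrixSigmaWeak (M : Type*) [SigmaWeak M] (m n : Type*) :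
    SigmaWeak (Matrix m n M) :=
  ⟨TopologicalSpace.induced (fun A i j => A i j)
    (@Pi.topologicalSpace m (fun _ => n → M)
      (fun _ => @Pi.topologicalSpace n (fun _ => M) (fun _ => SigmaWeak.topology)))⟩

/-- Positivity of a square matrix over a `*`-algebra: `X = Bᴴ B`. -/
def matPos {A : Type*} [NonUnitalSemiring A] [StarRing A] {m : ℕ}
    (X : Matrix (Fin m) (Fin m) A) : Prop :=
  ∃ B : Matrix (Fin m) (Fin m) A, X = B.conjTranspose * B

/-- The `2 × 2` "matrix of maps" `[[v₁, T],[Tc, v₂]]`, acting entrywise on the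
corners of a `2 × 2` matrix. -/
def blockMap {E F : Type*} (v₁ T Tc v₂ : E → F)
    (A : Matrix (Fin 2) (Fin 2) E) : Matrix (Fin 2) (Fin 2) F :=
  Matrix.of fun i j =>
    if i = 0 then (if j = 0 then v₁ (A i j) else T (A i j))
    else if j = 0 then Tc (A i j) else v₂ (A i j)

/-- View an `m × m` matrix of `2 × 2` matrices as a `2m × 2m` matrix. -/
def unblock {E : Type*} {m : ℕ} (A : Matrix (Fin m) (Fin m) (Matrix (Fin 2) (Fin 2) E)) :
    Matrix (Fin (m * 2)) (Fin (m * 2)) E :=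
  Matrix.of fun i j =>
    A (finProdFinEquiv.symm i).1 (finProdFinEquiv.symm j).1
      (finProdFinEquiv.symm i).2 (finProdFinEquiv.symm j).2

/-- The map `T∘ : x ↦ T(x*)*`. -/
def circAlg {M N : Type*} [Star M] [Star N] (T : M → N) : M → N :=
  fun x => star (T (star x))

/-- `n`-positivity (`n ∈ {1, 2, …, ∞}`) of a map between von Neumann algebras:
all matrix amplifications of size `m ≤ n` preserve positivity
(`n = ⊤` is complete positivity). -/
def IsNPosAlgMap {M N : Type*} [NonUnitalSemiring M] [StarRing M]
    [NonUnitalSemiring N] [StarRing N] (n : ℕ∞) (v : M → N) : Prop :=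
  ∀ m : ℕ, (m : ℕ∞) ≤ n → ∀ X : Matrix (Fin m) (Fin m) M, matPos X → matPos (X.map v)

/-- `n`-positivity of a `2 × 2`-matrix map between von Neumann algebras, i.e.
positivity of `Id_{M_m} ⊗ Φ` for all `m ≤ n`. -/
def IsNPos2AlgMap {M N : Type*} [NonUnitalSemiring M] [StarRing M]
    [NonUnitalSemiring N] [StarRing N] (n : ℕ∞)
    (Φ : Matrix (Fin 2) (Fin 2) M → Matrix (Fin 2) (Fin 2) N) : Prop :=
  ∀ m : ℕ, (m : ℕ∞) ≤ n →
    ∀ A : Matrix (Fin m) (Fin m) (Matrix (Fin 2) (Fin 2) M),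
      matPos (unblock A) → matPos (unblock (A.map Φ))

/-- An abstract model of the Haagerup noncommutative `L^p`-space of a von Neumann
algebra `M`. -/
structure NCLp (p : ℝ≥0∞) (M : Type*) [NormedRing M] [StarRing M] [NormedAlgebra ℂ M] where
  /-- the underlying Banach space `L^p(M)` -/
  E : Type*
  [grp : NormedAddCommGroup E]
  [mod : NormedSpace ℂ E]
  /-- the adjoint operation `x ↦ x*` -/
  adj : E → E
  adj_involutive : Function.Involutive adj
  adj_add : ∀ x y : E, adj (x + y) = adj x + adj y
  adj_smul : ∀ (c : ℂ) (x : E), adj (c • x) = conj c • adj x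
  /-- the positive cone of `S^p_m(L^p(M)) = L^p(M_m(M))`, realized on `m × m`
  matrices with entries in `L^p(M)` -/
  MPos : (m : ℕ) → Set (Matrix (Fin m) (Fin m) E)
  /-- left action `a · x` of `M` on `L^p(M)` -/
  lsmul : M → E → E
  /-- right action `x · a` of `M` on `L^p(M)` -/
  rsmul : M → E → E
  lsmul_add : ∀ (a : M) (x y : E), lsmul a (x + y) = lsmul a x + lsmul a y
  lsmul_smul : ∀ (a : M) (c : ℂ) (x : E), lsmul a (c • x) = c • lsmul a x
  rsmul_add : ∀ (a : M) (x y : E), rsmul a (x + y) = rsmul a x + rsmul a y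
  rsmul_smul : ∀ (a : M) (c : ℂ) (x : E), rsmul a (c • x) = c • rsmul a x
  lsmul_mul : ∀ (a b : M) (x : E), lsmul (a * b) x = lsmul a (lsmul b x)
  rsmul_mul : ∀ (a b : M) (x : E), rsmul (a * b) x = rsmul b (rsmul a x)
  lsmul_one : ∀ x : E, lsmul 1 x = x
  rsmul_one : ∀ x : E, rsmul 1 x = x
  lsmul_rsmul : ∀ (a b : M) (x : E), lsmul a (rsmul b x) = rsmul b (lsmul a x)
  norm_lsmul : ∀ (a : M) (x : E), ‖lsmul a x‖ ≤ ‖a‖ * ‖x‖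
  norm_rsmul : ∀ (a : M) (x : E), ‖rsmul a x‖ ≤ ‖a‖ * ‖x‖
  /-- the support projection of a (positive) element -/
  supp : E → M
  supp_idem : ∀ h : E, IsIdempotentElem (supp h)
  supp_sa : ∀ h : E, IsSelfAdjoint (supp h)
  supp_eq : ∀ h : E, lsmul (supp h) (rsmul (supp h) h) = h
  /-- the sandwich product `(h, x, k) ↦ h^{1/2} x k^{1/2}` (for positive `h`, `k`) -/
  sand : E → M → E → E
  /-- the sandwich product `(H, X, K) ↦ H^{1/2} X K^{1/2}` at the level of the
  amplification `S^p_m(L^p(M)) = L^p(M_m(M))` -/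
  msand : (m : ℕ) → Matrix (Fin m) (Fin m) E → Matrix (Fin m) (Fin m) M →
      Matrix (Fin m) (Fin m) E → Matrix (Fin m) (Fin m) E
  /-- the norm of the amplification `S^p_m(L^p(M))` -/
  mnorm : (m : ℕ) → Matrix (Fin m) (Fin m) E → ℝ
  mnorm_one : ∀ x : E, mnorm 1 (Matrix.of fun _ _ => x) = ‖x‖
  /-- the functional `(H, x) ↦ tr(H^p x)` (for `H` positive in `S^p_m(L^p(M))`,
  `x ∈ M_m(M)`) -/
  ptr : (m : ℕ) → Matrix (Fin m) (Fin m) E → Matrix (Fin m) (Fin m) M → ℂ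

attribute [instance] NCLp.grp NCLp.mod

/-- The diagonal `2 × 2` matrix `diag(h, k)`. -/
def diag2 {E : Type*} [Zero E] (h k : E) : Matrix (Fin 2) (Fin 2) E :=
  Matrix.of ![![h, 0], ![0, k]]

namespace NCLp

variable {p : ℝ≥0∞} {M N : Type*} [NormedRing M] [StarRing M] [NormedAlgebra ℂ M]
  [NormedRing N] [StarRing N] [NormedAlgebra ℂ N]

/-- The positive cone of `L^p(M)`. -/
def Pos (L : NCLp p M) : Set L.E :=
  {x | (Matrix.of (fun _ _ => x) : Matrix (Fin 1) (Fin 1) L.E) ∈ L.MPos 1}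

/-- Left multiplication of an `m × m` matrix over `M` on `S^p_m(L^p(M))`. -/
def mL (L : NCLp p M) {m : ℕ} (X : Matrix (Fin m) (Fin m) M)
    (A : Matrix (Fin m) (Fin m) L.E) : Matrix (Fin m) (Fin m) L.E :=
  Matrix.of fun i j => ∑ l, L.lsmul (X i l) (A l j)

/-- Right multiplication of an `m × m` matrix over `M` on `S^p_m(L^p(M))`. -/
def mR (L : NCLp p M) {m : ℕ} (X : Matrix (Fin m) (Fin m) M)
    (A : Matrix (Fin m) (Fin m) L.E) : Matrix (Fin m) (Fin m) L.E :=
  Matrix.of fun i j => ∑ l, L.rsmul (X l j) (A i l)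

/-- `n`-positivity (`n ∈ {1, 2, …, ∞}`) of a map `L^p(M) → L^p(N)`:
`Id_{S^p_m} ⊗ T` is positive for all `m ≤ n` (`n = ⊤` is complete positivity). -/
def IsNPosMap (LM : NCLp p M) (LN : NCLp p N) (n : ℕ∞) (T : LM.E → LN.E) : Prop :=
  ∀ m : ℕ, (m : ℕ∞) ≤ n → ∀ A ∈ LM.MPos m, A.map T ∈ LN.MPos m

/-- The map `T∘ : x ↦ T(x*)*` on `L^p`-spaces. -/
def circ (LM : NCLp p M) (LN : NCLp p N) (T : LM.E → LN.E) : LM.E → LN.E :=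
  fun x => LN.adj (T (LM.adj x))

/-- `n`-positivity of a map `S^p_2(L^p(M)) → S^p_2(L^p(N))`:
`Id_{S^p_m} ⊗ Φ` is positive for all `m ≤ n`. -/
def IsNPos2Map (LM : NCLp p M) (LN : NCLp p N) (n : ℕ∞)
    (Φ : Matrix (Fin 2) (Fin 2) LM.E → Matrix (Fin 2) (Fin 2) LN.E) : Prop :=
  ∀ m : ℕ, (m : ℕ∞) ≤ n →
    ∀ A : Matrix (Fin m) (Fin m) (Matrix (Fin 2) (Fin 2) LM.E),
      unblock A ∈ LM.MPos (m * 2) → unblock (A.map Φ) ∈ LN.MPos (m * 2)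

/-- The `2 × 2` matrix map `Φ = [[v₁, T],[T∘, v₂]] : S^p_2(L^p(M)) → S^p_2(L^p(N))`. -/
def Phi2 (LM : NCLp p M) (LN : NCLp p N) (v₁ T v₂ : LM.E →L[ℂ] LN.E) :
    Matrix (Fin 2) (Fin 2) LM.E → Matrix (Fin 2) (Fin 2) LN.E :=
  blockMap ⇑v₁ ⇑T (circ LM LN ⇑T) ⇑v₂

/-- The set of numbers `max {‖v₁‖, ‖v₂‖}` over all decompositions
`[[v₁, T],[T∘, v₂]]` of `T` witnessing `n`-pseudo-decomposability. -/
def pdecSet (LM : NCLp p M) (LN : NCLp p N) (n : ℕ∞) (T : LM.E →L[ℂ] LN.E) : Set ℝ :=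
  {r | ∃ v₁ v₂ : LM.E →L[ℂ] LN.E,
    IsNPos2Map LM LN n (blockMap ⇑v₁ ⇑T (circ LM LN ⇑T) ⇑v₂) ∧ r = max ‖v₁‖ ‖v₂‖}

/-- `T : L^p(M) → L^p(N)` is `n`-pseudo-decomposable if there are `v₁, v₂` such
that the map `[[v₁, T],[T∘, v₂]] : S^p_2(L^p(M)) → S^p_2(L^p(N))` is `n`-positive. -/
def IsPDec (LM : NCLp p M) (LN : NCLp p N) (n : ℕ∞) (T : LM.E →L[ℂ] LN.E) : Prop :=
  (pdecSet LM LN n T).Nonempty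

/-- The `n`-pseudo-decomposable norm `‖T‖_{n-pdec} = inf max {‖v₁‖, ‖v₂‖}`. -/
def pdecNorm (LM : NCLp p M) (LN : NCLp p N) (n : ℕ∞) (T : LM.E →L[ℂ] LN.E) : ℝ :=
  sInf (pdecSet LM LN n T)

/-- `T` is contractively `n`-pseudo-decomposable if it is `n`-pseudo-decomposable
with `‖T‖_{n-pdec} ≤ 1`. -/
def IsContraPDec (LM : NCLp p M) (LN : NCLp p N) (n : ℕ∞) (T : LM.E →L[ℂ] LN.E) : Prop :=
  IsPDec LM LN n T ∧ pdecNorm LM LN n T ≤ 1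

end NCLp

/-- `w : M → N` is contractively `n`-pseudo-decomposable at the level of the von
Neumann algebras (i.e. `p = ∞`): there is a decomposition `[[u₁, w],[w∘, u₂]]`
which is `n`-positive with `max {‖u₁‖, ‖u₂‖} ≤ 1`. -/
def IsContraPDecAlg {M N : Type*} [NormedRing M] [StarRing M] [NormedAlgebra ℂ M]
    [NormedRing N] [StarRing N] [NormedAlgebra ℂ N] (n : ℕ∞) (w : M → N) : Prop :=
  ∃ u₁ u₂ : M →L[ℂ] N,
    IsNPos2AlgMap n (blockMap ⇑u₁ w (circAlg w) ⇑u₂) ∧ max ‖u₁‖ ‖u₂‖ ≤ 1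

/-- A normal semifinite faithful weight on a von Neumann algebra `A`. -/
structure NSFWeight (A : Type*) [Ring A] [StarRing A] [SigmaWeak A] where
  toFun : A → ℝ≥0∞
  add_pos : ∀ x y : A,
    toFun (star x * x + star y * y) = toFun (star x * x) + toFun (star y * y)
  faithful : ∀ x : A, toFun (star x * x) = 0 → x = 0
  normal : @LowerSemicontinuous A ℝ≥0∞ SigmaWeak.topology _ toFun
  semifinite : @Dense A SigmaWeak.topology {x | toFun (star x * x) ≠ ⊤}

/-- A von Neumann algebra is σ-finite (countably decomposable) if every family of
pairwise orthogonal nonzero projections is countable. -/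
def IsSigmaFinite (M : Type*) [Ring M] [StarRing M] : Prop :=
  ∀ S : Set M, (∀ e ∈ S, IsIdempotentElem e ∧ IsSelfAdjoint e ∧ e ≠ 0) →
    (∀ e ∈ S, ∀ f ∈ S, e ≠ f → e * f = 0) → S.Countable

/-- A `W^*`-ternary ring of operators, realized as a corner `q N r` of a von
Neumann algebra `N`, together with its matrix norms (operator space structure). -/
structure WStarTRO where
  carrier : Type
  [ring : NormedRing carrier]
  [starRing : StarRing carrier]
  [alg : NormedAlgebra ℂ carrier]
  /-- the matrix norms (operator space structure) -/
  matNorm : (m : ℕ) → Matrix (Fin m) (Fin m) carrier → ℝ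
  /-- the left projection -/
  q : carrier
  /-- the right projection -/
  r : carrier
  q_idem : q * q = q
  q_sa : IsSelfAdjoint q
  r_idem : r * r = r
  r_sa : IsSelfAdjoint r

attribute [instance] WStarTRO.ring WStarTRO.starRing WStarTRO.alg

/-- Matrix norm (operator space) data on a von Neumann algebra. -/
class OSNorm (A : Type*) where
  /-- the norm on `m × m` matrices -/
  matNorm : (m : ℕ) → Matrix (Fin m) (Fin m) A → ℝ

theorem lifted_map_is_projection_general
    {M : Type*} [NormedRing M] [StarRing M] [NormedAlgebra ℂ M]
    (p : ℝ≥0∞)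
    (LM : NCLp p M) (P : LM.E →L[ℂ] LM.E)
    (hproj : ∀ x, P (P x) = P x)
    (h k : LM.E)
    (w : M →ₗ[ℂ] M)
    (hwcorner : ∀ x, w x = LM.supp h * w x * LM.supp k)
    (hweq : ∀ x, P (LM.sand h x k) = LM.sand h (w x) k)
    (hwunique : ∀ w' : M →ₗ[ℂ] M,
      ((∀ x, w' x = LM.supp h * w' x * LM.supp k) ∧
        ∀ x, P (LM.sand h x k) = LM.sand h (w' x) k) → w' = w) :
    ∀ x : M, LM.supp h * x * LM.supp k = x → w (w x) = w x := by
  have hsemiconj : Function.Semiconj (LM.sand h · k) w P := fun x => (hweq x).symm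
  have hsemiconj_sq : Function.Semiconj (LM.sand h · k) (w ∘ w) P := by
    simpa only [Function.comp_def, hproj] using hsemiconj.comp_right hsemiconj
  have hww : w ∘ₗ w = w :=
    hwunique _ ⟨fun x => hwcorner (w x), fun x => (hsemiconj_sq x).symm⟩
  intro x _
  exact LinearMap.congr_fun hww x

/-- **Lemma.** Suppose `1 < p < ∞` and `n ∈ {1,2,…,∞}`. Let
`P : L^p(M) → L^p(M)` be a projection and `P₁, P₂ : L^p(M) → L^p(M)`
contractive projections such that `[[P₁, P],[P∘, P₂]]` is `n`-positive. Let
`h, k` be positive elements of `L^p(M)` with `P₁(h) = h` and `P₂(k) = k`, and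
let `w : M → s(h) M s(k)` be the unique linear map satisfying
`P(h^{1/2} x k^{1/2}) = h^{1/2} w(x) k^{1/2}` for all `x ∈ M`. Then the
restriction `R` of `w` to `s(h) M s(k)` is a projection, i.e. `R² = R`. -/
theorem lifted_map_is_projection
    {M : Type*} [NormedRing M] [StarRing M] [NormedAlgebra ℂ M]
    (p : ℝ≥0∞) (hp₁ : 1 < p) (hp₂ : p ≠ ⊤) (n : ℕ∞) (hn : 1 ≤ n)
    (LM : NCLp p M) (P P₁ P₂ : LM.E →L[ℂ] LM.E)
    (hproj : ∀ x, P (P x) = P x)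
    (hP₁c : ∀ x, ‖P₁ x‖ ≤ ‖x‖) (hP₂c : ∀ x, ‖P₂ x‖ ≤ ‖x‖)
    (hP₁p : ∀ x, P₁ (P₁ x) = P₁ x) (hP₂p : ∀ x, P₂ (P₂ x) = P₂ x)
    (hΦ : NCLp.IsNPos2Map LM LM n (NCLp.Phi2 LM LM P₁ P P₂))
    (h k : LM.E) (hh : h ∈ LM.Pos) (hk : k ∈ LM.Pos)
    (hfixh : P₁ h = h) (hfixk : P₂ k = k)
    (w : M →ₗ[ℂ] M)
    (hwcorner : ∀ x, w x = LM.supp h * w x * LM.supp k)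
    (hweq : ∀ x, P (LM.sand h x k) = LM.sand h (w x) k)
    (hwunique : ∀ w' : M →ₗ[ℂ] M,
      ((∀ x, w' x = LM.supp h * w' x * LM.supp k) ∧
        ∀ x, P (LM.sand h x k) = LM.sand h (w' x) k) → w' = w) :
    ∀ x : M, LM.supp h * x * LM.supp k = x → w (w x) = w x :=
  lifted_map_is_projection_general p LM P hproj h k w hwcorner hweq hwunique

end
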